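/- arXiv:2406.12796 — 9 statements merged into one kernel-verified Lean document; each statement's English description precedes it below -/
import Mathlib

section
/- If L_N is a normal subloop of a Steiner loop L_S, with N = L_N \ {Ω}, then for any x ∉ L_N, the set x·L_N ∪ N is a subsystem of the Steiner triple system S, and it is generated by the coset x·L_N. -/
structure SteinerLoopStr (L : Type) where
  mul : L → L → L
  one : L
  one_mul : ∀ x, mul one x = x
  comm : ∀ x y, mul x y = mul y x
  mul_self : ∀ x, mul x x = one
  ts : ∀ x y, mul x (mul x y) = y

/-- `N` is a subloop: contains the identity and is closed under multiplication. -/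
def IsSubloop {L : Type} (S : SteinerLoopStr L) (N : Set L) : Prop :=
  S.one ∈ N ∧ ∀ a ∈ N, ∀ b ∈ N, S.mul a b ∈ N

/-- `N` is a normal subloop: `x (y N) = (x y) N` for all `x, y`. -/
def IsNormalSubloop {L : Type} (S : SteinerLoopStr L) (N : Set L) : Prop :=
  IsSubloop S N ∧
    ∀ x y : L, (fun n => S.mul x (S.mul y n)) '' N = (fun n => S.mul (S.mul x y) n) '' N

/-- A subsystem of the Steiner triple system `S = L \ {Ω}`: does not contain
the identity and is closed under taking the third point of a triple. -/
def IsSubsystem {L : Type} (S : SteinerLoopStr L) (R : Set L) : Prop :=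
  S.one ∉ R ∧ ∀ a ∈ R, ∀ b ∈ R, a ≠ b → S.mul a b ∈ R

theorem coset_generates_subsystem {L : Type} (S : SteinerLoopStr L)
    (N : Set L) (hN : IsNormalSubloop S N) (x : L) (hx : x ∉ N) :
    IsSubsystem S ((S.mul x '' N) ∪ (N \ {S.one})) ∧
      ∀ R : Set L, IsSubsystem S R → S.mul x '' N ⊆ R →
        (S.mul x '' N) ∪ (N \ {S.one}) ⊆ R := by
  obtain ⟨⟨h1, hcl⟩, hnorm⟩ := hN
  have mul_one : ∀ a, S.mul a S.one = a := fun a => by rw [S.comm, S.one_mul]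
  have ne_one_of : ∀ a b : L, a ≠ b → S.mul a b ≠ S.one := by
    intro a b hab h
    have := S.ts a b
    rw [h, mul_one] at this
    exact hab this
  constructor
  · constructor
    · rintro (⟨n, hn, hxn⟩ | hone)
      · apply hx
        have := S.ts x n
        rw [hxn, mul_one] at this
        rwa [this]
      · exact hone.2 rfl
    · rintro a (⟨m, hm, rfl⟩ | ham) b (⟨n, hn, rfl⟩ | hbn) hab
      · right
        refine ⟨?_, ne_one_of _ _ hab⟩
        have key := hnorm (S.mul x m) x
        have mem : S.mul (S.mul x m) (S.mul x n)
            ∈ (fun k => S.mul (S.mul x m) (S.mul x k)) '' N := ⟨n, hn, rfl⟩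
        rw [key] at mem
        obtain ⟨k, hk, hkeq⟩ := mem
        have hxmx : S.mul (S.mul x m) x = m := by rw [S.comm]; exact S.ts x m
        rw [hxmx] at hkeq
        rw [← hkeq]
        exact hcl m hm k hk
      · left
        have key := hnorm x m
        have mem : S.mul (S.mul x m) b ∈ (fun k => S.mul (S.mul x m) k) '' N :=
          ⟨b, hbn.1, rfl⟩
        rw [← key] at mem
        obtain ⟨k, hk, hkeq⟩ := mem
        exact ⟨S.mul m k, hcl m hm k hk, hkeq⟩
      · left
        rw [S.comm]
        have key := hnorm x n
        have mem : S.mul (S.mul x n) a ∈ (fun k => S.mul (S.mul x n) k) '' N :=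
          ⟨a, ham.1, rfl⟩
        rw [← key] at mem
        obtain ⟨k, hk, hkeq⟩ := mem
        exact ⟨S.mul n k, hcl n hn k hk, hkeq⟩
      · exact Or.inr ⟨hcl a ham.1 b hbn.1, ne_one_of a b hab⟩
  · rintro R ⟨hR1, hRcl⟩ hsub a (ha | ⟨haN, ha1⟩)
    · exact hsub ha
    · have hxR : x ∈ R := hsub ⟨S.one, h1, mul_one x⟩
      have hxaR : S.mul x a ∈ R := hsub ⟨a, haN, rfl⟩
      have hne : x ≠ S.mul x a := by
        intro h
        apply ha1
        have := S.ts x a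
        rw [← h, S.mul_self] at this
        exact this.symm
      have := hRcl x hxR (S.mul x a) hxaR hne
      rwa [S.ts] at this
end

section
/- A subsystem N of a Steiner triple system S of order v is a projective hyperplane (every triple of S meets N) if and only if |N| = (v-1)/2. -/
lemma third_point {V : Type} [DecidableEq V] (t : Finset V) (h3 : t.card = 3)
    {p x : V} (hp : p ∈ t) (hx : x ∈ t) (hne : p ≠ x) :
    ∃ y, y ≠ p ∧ y ≠ x ∧ t = {p, x, y} := by
  have hsub : ({p, x} : Finset V) ⊆ t := by
    intro z hz; simp at hz; rcases hz with h | h <;> subst h <;> assumption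
  have hc2 : ({p, x} : Finset V).card = 2 := by
    rw [Finset.card_insert_of_notMem (by simpa using hne), Finset.card_singleton]
  have hcd : (t \ {p, x}).card = 1 := by
    rw [Finset.card_sdiff_of_subset hsub, hc2, h3]
  obtain ⟨y, hy⟩ := Finset.card_eq_one.mp hcd
  have hymem : y ∈ t \ ({p, x} : Finset V) := by rw [hy]; simp
  rw [Finset.mem_sdiff, Finset.mem_insert, Finset.mem_singleton] at hymem
  refine ⟨y, fun h => hymem.2 (Or.inl h), fun h => hymem.2 (Or.inr h), ?_⟩
  have := Finset.union_sdiff_of_subset hsub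
  rw [hy] at this
  rw [← this]
  ext z; simp [or_assoc]

lemma sigma_exists {V : Type} [Fintype V] [DecidableEq V]
    (T : Finset (Finset V))
    (h3 : ∀ t ∈ T, t.card = 3)
    (hpair : ∀ x y : V, x ≠ y → ∃! t, t ∈ T ∧ x ∈ t ∧ y ∈ t)
    (N : Finset V)
    (hsub : ∀ t ∈ T, 2 ≤ (t ∩ N).card → t ⊆ N)
    (p : V) (hp : p ∉ N) :
    ∃ σ : V → V,
      (∀ x, x ≠ p → σ x ≠ p ∧ σ x ≠ x ∧ ({p, x, σ x} : Finset V) ∈ T ∧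
        σ (σ x) = x ∧ (x ∈ N → σ x ∉ N) ∧
        (∀ t ∈ T, p ∈ t → x ∈ t → t = {p, x, σ x})) ∧
      Disjoint N (N.image σ) ∧
      (N ∪ N.image σ) ⊆ Finset.univ.erase p ∧
      (N.image σ).card = N.card := by
  have key : ∀ x : V, ∃ y : V, x ≠ p → y ≠ p ∧ y ≠ x ∧ ({p, x, y} : Finset V) ∈ T ∧
      (∀ t ∈ T, p ∈ t → x ∈ t → t = {p, x, y}) := by
    intro x
    by_cases hx : x = p
    · exact ⟨p, fun h => absurd hx h⟩
    · obtain ⟨t, ⟨htT, hpt, hxt⟩, huniq⟩ := hpair p x (Ne.symm hx)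
      obtain ⟨y, hyp, hyx, hty⟩ := third_point t (h3 t htT) hpt hxt (Ne.symm hx)
      refine ⟨y, fun _ => ⟨hyp, hyx, hty ▸ htT, fun t' ht' hpt' hxt' => ?_⟩⟩
      rw [← hty]; exact huniq t' ⟨ht', hpt', hxt'⟩
  choose σ hσ using key
  have hσp : ∀ x, x ≠ p → σ x ≠ p := fun x hx => (hσ x hx).1
  have hσx : ∀ x, x ≠ p → σ x ≠ x := fun x hx => (hσ x hx).2.1
  have hσT : ∀ x, x ≠ p → ({p, x, σ x} : Finset V) ∈ T := fun x hx => (hσ x hx).2.2.1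
  have hσu : ∀ x, x ≠ p → ∀ t ∈ T, p ∈ t → x ∈ t → t = {p, x, σ x} :=
    fun x hx => (hσ x hx).2.2.2
  have hinv : ∀ x, x ≠ p → σ (σ x) = x := by
    intro x hx
    have h1 := hσu (σ x) (hσp x hx) {p, x, σ x} (hσT x hx) (by simp) (by simp)
    have : x ∈ ({p, σ x, σ (σ x)} : Finset V) := by rw [← h1]; simp
    simp only [Finset.mem_insert, Finset.mem_singleton] at this
    rcases this with h | h | h
    · exact absurd h hx
    · exact absurd h.symm (hσx x hx)
    · exact h.symm
  have hA : ∀ x, x ≠ p → x ∈ N → σ x ∉ N := by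
    intro x hx hxN hσN
    apply hp
    have h2 : 2 ≤ (({p, x, σ x} : Finset V) ∩ N).card := by
      have hsub2 : ({x, σ x} : Finset V) ⊆ {p, x, σ x} ∩ N := by
        intro z hz; simp at hz
        rcases hz with h | h <;> subst h <;> simp [hxN, hσN]
      calc 2 = ({x, σ x} : Finset V).card := by
              rw [Finset.card_insert_of_notMem (by simpa using (hσx x hx).symm)]; simp
        _ ≤ _ := Finset.card_le_card hsub2
    exact hsub _ (hσT x hx) h2 (by simp)
  have hnep : ∀ x ∈ N, x ≠ p := fun x hxN h => hp (h ▸ hxN)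
  refine ⟨σ, fun x hx => ⟨hσp x hx, hσx x hx, hσT x hx, hinv x hx, hA x hx, hσu x hx⟩,
    ?_, ?_, ?_⟩
  · rw [Finset.disjoint_right]
    intro z hz hzN
    simp only [Finset.mem_image] at hz
    obtain ⟨x, hxN, rfl⟩ := hz
    exact hA x (hnep x hxN) hxN hzN
  · intro z hz
    rw [Finset.mem_union] at hz
    rw [Finset.mem_erase]
    rcases hz with h | h
    · exact ⟨hnep z h, Finset.mem_univ z⟩
    · simp only [Finset.mem_image] at h
      obtain ⟨x, hxN, rfl⟩ := h
      exact ⟨hσp x (hnep x hxN), Finset.mem_univ _⟩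
  · apply Finset.card_image_of_injOn
    intro x hx y hy hxy
    have := hinv x (hnep x hx)
    rw [hxy, hinv y (hnep y hy)] at this
    exact this.symm

theorem projective_hyperplane_iff_card {V : Type} [Fintype V] [DecidableEq V]
    (T : Finset (Finset V))
    (h3 : ∀ t ∈ T, t.card = 3)
    (hpair : ∀ x y : V, x ≠ y → ∃! t, t ∈ T ∧ x ∈ t ∧ y ∈ t)
    (N : Finset V)
    (hsub : ∀ t ∈ T, 2 ≤ (t ∩ N).card → t ⊆ N)
    (hproper : N ≠ Finset.univ) :
    (∀ t ∈ T, (t ∩ N).Nonempty) ↔ N.card = (Fintype.card V - 1) / 2 := by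
  constructor
  · intro hhyp
    obtain ⟨p, hp⟩ : ∃ p, p ∉ N := by
      by_contra h
      push_neg at h
      exact hproper (Finset.eq_univ_iff_forall.mpr h)
    obtain ⟨σ, hper, hdisj, hsubΩ, himg⟩ := sigma_exists T h3 hpair N hsub p hp
    have hΩcard : (Finset.univ.erase p).card = Fintype.card V - 1 := by
      rw [Finset.card_erase_of_mem (Finset.mem_univ p), Finset.card_univ]
    have hucard : (N ∪ N.image σ).card = 2 * N.card := by
      rw [Finset.card_union_of_disjoint hdisj, himg]; ring
    -- Ω ⊆ N ∪ image σ N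
    have hcover : Finset.univ.erase p ⊆ N ∪ N.image σ := by
      intro x hx
      rw [Finset.mem_erase] at hx
      obtain ⟨hσp, hσx, hσT, hinv, hAN, huniq⟩ := hper x hx.1
      obtain ⟨z, hz⟩ := hhyp _ hσT
      rw [Finset.mem_inter] at hz
      have hzmem := hz.1
      simp only [Finset.mem_insert, Finset.mem_singleton] at hzmem
      rcases hzmem with rfl | rfl | rfl
      · exact absurd hz.2 hp
      · exact Finset.mem_union_left _ hz.2
      · apply Finset.mem_union_right
        rw [Finset.mem_image]
        exact ⟨σ x, hz.2, hinv⟩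
    have h1 : 2 * N.card ≤ Fintype.card V - 1 := by
      rw [← hucard, ← hΩcard]
      exact Finset.card_le_card hsubΩ
    have h2 : Fintype.card V - 1 ≤ 2 * N.card := by
      rw [← hucard, ← hΩcard]
      exact Finset.card_le_card hcover
    omega
  · intro hcard
    intro t htT
    by_contra hempty
    rw [Finset.not_nonempty_iff_eq_empty] at hempty
    have htN : ∀ z ∈ t, z ∉ N := by
      intro z hz hzN
      have : z ∈ t ∩ N := Finset.mem_inter.mpr ⟨hz, hzN⟩
      rw [hempty] at this
      exact absurd this (Finset.notMem_empty z)
    obtain ⟨p, hpt⟩ : t.Nonempty := Finset.card_pos.mp (by rw [h3 t htT]; norm_num)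
    have hp : p ∉ N := htN p hpt
    obtain ⟨σ, hper, hdisj, hsubΩ, himg⟩ := sigma_exists T h3 hpair N hsub p hp
    have hΩcard : (Finset.univ.erase p).card = Fintype.card V - 1 := by
      rw [Finset.card_erase_of_mem (Finset.mem_univ p), Finset.card_univ]
    have hucard : (N ∪ N.image σ).card = 2 * N.card := by
      rw [Finset.card_union_of_disjoint hdisj, himg]; ring
    -- get x ∈ t with x ≠ p
    obtain ⟨x, hxt, hxp⟩ : ∃ x ∈ t, x ≠ p := by
      by_contra h
      push_neg at h
      have : t ⊆ {p} := fun z hz => Finset.mem_singleton.mpr (h z hz)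
      have := Finset.card_le_card this
      rw [h3 t htT, Finset.card_singleton] at this
      omega
    obtain ⟨hσp, hσx, hσT, hinv, hAN, huniq⟩ := hper x hxp
    have ht_eq : t = {p, x, σ x} := huniq t htT hpt hxt
    have hσxt : σ x ∈ t := by rw [ht_eq]; simp
    have hnep : ∀ z ∈ N, z ≠ p := fun z hzN h => hp (h ▸ hzN)
    -- x and σ x are both outside N ∪ image σ N
    have hxout : x ∉ N ∪ N.image σ := by
      rw [Finset.mem_union]
      rintro (h | h)
      · exact htN x hxt h
      · rw [Finset.mem_image] at h
        obtain ⟨y, hyN, hyx⟩ := h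
        have : σ x = y := by
          rw [← hyx, (hper y (hnep y hyN)).2.2.2.1]
        exact htN (σ x) hσxt (this ▸ hyN)
    have hσxout : σ x ∉ N ∪ N.image σ := by
      rw [Finset.mem_union]
      rintro (h | h)
      · exact htN (σ x) hσxt h
      · rw [Finset.mem_image] at h
        obtain ⟨y, hyN, hyx⟩ := h
        have : x = y := by
          have h1 : σ (σ x) = σ (σ y) := by rw [hyx]
          rwa [hinv, (hper y (hnep y hyN)).2.2.2.1] at h1
        exact htN x hxt (this ▸ hyN)
    -- counting contradiction
    have hpair2 : ({x, σ x} : Finset V) ⊆ Finset.univ.erase p \ (N ∪ N.image σ) := by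
      intro z hz
      simp only [Finset.mem_insert, Finset.mem_singleton] at hz
      rw [Finset.mem_sdiff, Finset.mem_erase]
      rcases hz with rfl | rfl
      · exact ⟨⟨hxp, Finset.mem_univ _⟩, hxout⟩
      · exact ⟨⟨hσp, Finset.mem_univ _⟩, hσxout⟩
    have hc2 : ({x, σ x} : Finset V).card = 2 := by
      rw [Finset.card_insert_of_notMem (by simpa using hσx.symm)]; simp
    have hle := Finset.card_le_card hpair2
    rw [hc2, Finset.card_sdiff_of_subset hsubΩ, hΩcard, hucard] at hle
    have hub : 2 * N.card ≤ Fintype.card V - 1 := by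
      rw [← hucard, ← hΩcard]
      exact Finset.card_le_card hsubΩ
    omega
end

section
/- Let S be a Steiner triple system with Steiner loop L_S. A point x ∈ S is a Veblen point (whenever {x,a,b}, {x,c,d}, {y,a,c} are triples of S, so is {y,b,d}) if and only if x is a central element of L_S, i.e., (a·x)·b = a·(x·b) for all a,b ∈ L_S. -/
/-- `{a, b, c}` is a triple of the Steiner triple system underlying the
Steiner loop `S`: three distinct non-identity points with `a·b = c`. -/
def IsTriple {L : Type} (S : SteinerLoopStr L) (a b c : L) : Prop :=
  a ≠ S.one ∧ b ≠ S.one ∧ c ≠ S.one ∧ a ≠ b ∧ b ≠ c ∧ a ≠ c ∧ S.mul a b = c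

theorem veblen_iff_central {L : Type} (S : SteinerLoopStr L)
    (x : L) (hx : x ≠ S.one) :
    (∀ a b c d y : L, IsTriple S x a b → IsTriple S x c d → IsTriple S y a c →
        IsTriple S y b d) ↔
      (∀ a b : L, S.mul (S.mul a x) b = S.mul a (S.mul x b)) := by
  have m1 : ∀ a, S.mul a S.one = a := fun a => by rw [S.comm, S.one_mul]
  have tsr : ∀ a b, S.mul (S.mul a b) b = a := fun a b => by
    rw [S.comm, S.comm a b]; exact S.ts b a
  have cancel : ∀ u p q, S.mul u p = S.mul u q → p = q := fun u p q h => by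
    have := congrArg (S.mul u) h; rwa [S.ts, S.ts] at this
  have third : ∀ u v w, S.mul u v = w → S.mul v w = u := fun u v w h => by
    subst h; rw [S.comm u v, S.ts]
  constructor
  · intro H a b
    have j : ∀ p q, S.mul (S.mul p q) (S.mul x p) = S.mul x q := by
      intro p q
      by_cases hp1 : p = S.one
      · subst hp1; rw [S.one_mul, m1, S.comm]
      by_cases hq1 : q = S.one
      · subst hq1; rw [m1, m1, S.comm x p]; exact S.ts p x
      by_cases hpx : p = x
      · rw [hpx, S.mul_self, m1]
      by_cases hqx : q = x
      · rw [hqx, S.comm x p, S.mul_self, S.mul_self]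
      by_cases hpq : p = q
      · subst hpq; rw [S.mul_self, S.one_mul]
      by_cases hqxp : q = S.mul x p
      · subst hqxp
        rw [S.ts x p, S.comm x p, S.ts p x, S.comm p x]
        exact S.ts x p
      · have hxp1 : S.mul x p ≠ S.one := by
          intro h
          have := congrArg (S.mul x) h; rw [S.ts, m1] at this; exact hpx this
        have hpxp : p ≠ S.mul x p := by
          intro h
          have := third x p p h.symm; rw [S.mul_self] at this
          exact hx this.symm
        have hxxp : x ≠ S.mul x p := by
          intro h
          have := congrArg (S.mul x) h; rw [S.mul_self, S.ts] at this
          exact hp1 this.symm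
        have hxq1 : S.mul x q ≠ S.one := by
          intro h
          have := congrArg (S.mul x) h; rw [S.ts, m1] at this; exact hqx this
        have hqxq : q ≠ S.mul x q := by
          intro h
          have := third x q q h.symm; rw [S.mul_self] at this
          exact hx this.symm
        have hxxq : x ≠ S.mul x q := by
          intro h
          have := congrArg (S.mul x) h; rw [S.mul_self, S.ts] at this
          exact hq1 this.symm
        have T1 : IsTriple S x p (S.mul x p) :=
          ⟨hx, hp1, hxp1, fun h => hpx h.symm, hpxp, hxxp, rfl⟩
        have T2 : IsTriple S x q (S.mul x q) :=
          ⟨hx, hq1, hxq1, fun h => hqx h.symm, hqxq, hxxq, rfl⟩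
        have hpq1 : S.mul p q ≠ S.one := by
          intro h
          have := congrArg (S.mul p) h; rw [S.ts, m1] at this
          exact hpq this.symm
        have hpqp : S.mul p q ≠ p := by
          intro h
          have := congrArg (S.mul p) h; rw [S.ts, S.mul_self] at this
          exact hq1 this
        have hpqq : S.mul p q ≠ q := by
          intro h
          have := congrArg (S.mul q) h
          rw [S.comm p q, S.ts, S.mul_self] at this
          exact hp1 this
        have T3 : IsTriple S (S.mul p q) p q :=
          ⟨hpq1, hp1, hq1, hpqp, hpq, hpqq, by rw [S.comm]; exact S.ts p q⟩
        exact (H p (S.mul x p) q (S.mul x q) (S.mul p q) T1 T2 T3).2.2.2.2.2.2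
    have h1 := j a (S.mul x b)
    rw [S.ts] at h1
    rw [S.comm a x]
    exact third _ _ _ h1
  · intro h a c y d z T1 T2 T3
    obtain ⟨-, ha1, hc1, hxa, hac, hxc, hb⟩ := T1
    obtain ⟨-, hy1, hd1, hxy, hyd, hxd, hd⟩ := T2
    obtain ⟨hz1, -, -, hza, haz, hzy, hy⟩ := T3
    subst hb; subst hd; subst hy
    refine ⟨hz1, hc1, hd1, ?_, ?_, ?_, ?_⟩
    · intro hco
      exact hxy (by rw [hco, tsr x a])
    · intro hco
      exact haz (cancel x _ _ hco)
    · intro hco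
      have e1 : S.mul (S.mul z a) z = a := by rw [S.comm]; exact S.ts z a
      have e2 : S.mul (S.mul z a) z = x := by
        nth_rewrite 2 [hco]
        rw [S.comm x (S.mul z a)]; exact S.ts _ _
      exact hxa (e1.symm.trans e2).symm
    · have step : S.mul (S.mul z x) (S.mul x (S.mul z a)) = a := by
        rw [← h (S.mul z x) (S.mul z a)]
        have e3 : S.mul (S.mul z x) x = z := by
          rw [S.comm (S.mul z x) x, S.comm z x]; exact S.ts x z
        rw [e3]; exact S.ts z a
      have step2 : S.mul (S.mul z x) (S.mul (S.mul z x) a) = a := S.ts _ _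
      have e := cancel (S.mul z x) _ _ (step.trans step2.symm)
      rw [e, h z a]
end

section
/- If a and b are two distinct Veblen points of a Steiner triple system S, then the third point a·b of their triple is also a Veblen point. -/
/-- A Veblen point is a nontrivial central element of the Steiner loop. -/
def IsVeblen {L : Type} (S : SteinerLoopStr L) (x : L) : Prop :=
  x ≠ S.one ∧ ∀ a b : L, S.mul (S.mul a x) b = S.mul a (S.mul x b)

theorem third_point_of_veblen_triple_is_veblen {L : Type} (S : SteinerLoopStr L)
    (a b : L) (ha : IsVeblen S a) (hb : IsVeblen S b) (hab : a ≠ b) :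
    IsVeblen S (S.mul a b) := by
  obtain ⟨ha1, ha2⟩ := ha
  obtain ⟨hb1, hb2⟩ := hb
  constructor
  · intro h
    apply hab
    have := S.ts a b
    rw [h] at this
    rw [S.comm a S.one, S.one_mul] at this
    exact this
  · intro x y
    calc S.mul (S.mul x (S.mul a b)) y
        = S.mul (S.mul (S.mul x a) b) y := by rw [← ha2]
      _ = S.mul (S.mul x a) (S.mul b y) := by rw [hb2]
      _ = S.mul x (S.mul a (S.mul b y)) := by rw [ha2]
      _ = S.mul x (S.mul (S.mul a b) y) := by rw [hb2]
end

section
/- The center of a Steiner loop L_S of order v+1 is an elementary abelian 2-group; hence the set of Veblen points of S has cardinality 2^t − 1 for some t ≥ 0, and 2^t divides v+1. -/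
/-- The center of a Steiner loop. -/
def SteinerCenter {L : Type} (S : SteinerLoopStr L) : Set L :=
  {z | ∀ a b : L, S.mul a (S.mul z b) = S.mul (S.mul a z) b ∧
        S.mul (S.mul a z) b = S.mul z (S.mul a b)}

/-!
The center `Z` is closed under the loop product and the product is associative as soon as its
middle factor is central, so `Z` is a group; as `z * z = 1` for every `z`, it is a `2`-group.
Moreover `Z` acts on the whole loop by left translation, freely because `z * x = x` forces
`z = x * (x * z) = x * x = 1`, so the orbits partition `L` into blocks of size `|Z|` and
`|Z|` divides `|L|`.
-/

namespace SteinerLoopStr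

variable {L : Type} (S : SteinerLoopStr L)

theorem mul_one (x : L) : S.mul x S.one = x := by
  rw [S.comm, S.one_mul]

theorem one_mem_center : S.one ∈ SteinerCenter S := fun a b => by
  simp only [S.one_mul, S.mul_one, and_self]

theorem mul_assoc_of_mem_center {x z y : L} (hz : z ∈ SteinerCenter S) :
    S.mul (S.mul x z) y = S.mul x (S.mul z y) :=
  (hz x y).1.symm

theorem mul_mem_center {z₁ z₂ : L} (h₁ : z₁ ∈ SteinerCenter S) (h₂ : z₂ ∈ SteinerCenter S) :
    S.mul z₁ z₂ ∈ SteinerCenter S := by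
  intro a b
  refine ⟨?_, ?_⟩
  · calc S.mul a (S.mul (S.mul z₁ z₂) b)
        = S.mul a (S.mul z₁ (S.mul z₂ b)) := by rw [S.comm z₁ z₂, (h₁ z₂ b).2]
      _ = S.mul (S.mul (S.mul a z₁) z₂) b := by rw [(h₁ a _).1, (h₂ _ b).1]
      _ = S.mul (S.mul a (S.mul z₁ z₂)) b := by rw [(h₁ a z₂).1]
  · calc S.mul (S.mul a (S.mul z₁ z₂)) b
        = S.mul (S.mul (S.mul a z₁) z₂) b := by rw [(h₁ a z₂).1]
      _ = S.mul z₂ (S.mul z₁ (S.mul a b)) := by rw [(h₂ _ b).2, (h₁ a b).2]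
      _ = S.mul (S.mul z₁ z₂) (S.mul a b) := by rw [(h₁ z₂ _).1, S.comm z₂ z₁]

instance : Group (SteinerCenter S) where
  mul a b := ⟨S.mul a b, S.mul_mem_center a.2 b.2⟩
  one := ⟨S.one, S.one_mem_center⟩
  inv a := a
  mul_assoc a b c := Subtype.ext (S.mul_assoc_of_mem_center b.2)
  one_mul a := Subtype.ext (S.one_mul a)
  mul_one a := Subtype.ext (S.mul_one a)
  inv_mul_cancel a := Subtype.ext (S.mul_self a)

theorem isPGroup_two_center : IsPGroup 2 (SteinerCenter S) :=
  fun z => ⟨1, by rw [pow_one, sq]; exact Subtype.ext (S.mul_self z)⟩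

instance : MulAction (SteinerCenter S) L where
  smul z x := S.mul z x
  one_smul := S.one_mul
  mul_smul z₁ z₂ x := (z₂.2 z₁ x).1.symm

instance : IsCancelSMul (SteinerCenter S) L :=
  isCancelSMul_iff_eq_one_of_smul_eq.mpr fun z x (h : S.mul z x = x) =>
    Subtype.ext <| show (z : L) = S.one by rw [← S.mul_self x, ← S.ts x z, S.comm x z, h]

theorem card_center_dvd_card : Nat.card (SteinerCenter S) ∣ Nat.card L := by
  rw [Nat.card_congr (MulAction.selfEquivOrbitsQuotientProd (G := SteinerCenter S) (X := L)
    IsCancelSMul.stabilizer_eq_bot), Nat.card_prod]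
  exact dvd_mul_left _ _

end SteinerLoopStr

theorem center_elementary_abelian_two {L : Type} [Fintype L]
    (S : SteinerLoopStr L) :
    S.one ∈ SteinerCenter S ∧
    (∀ z ∈ SteinerCenter S, S.mul z z = S.one) ∧
    (∀ z₁ ∈ SteinerCenter S, ∀ z₂ ∈ SteinerCenter S,
        S.mul z₁ z₂ ∈ SteinerCenter S) ∧
    (∀ z₁ ∈ SteinerCenter S, ∀ z₂ ∈ SteinerCenter S, ∀ z₃ ∈ SteinerCenter S,
        S.mul (S.mul z₁ z₂) z₃ = S.mul z₁ (S.mul z₂ z₃)) ∧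
    ∃ t : ℕ, (SteinerCenter S \ {S.one}).ncard = 2 ^ t - 1 ∧
      2 ^ t ∣ Fintype.card L := by
  refine ⟨S.one_mem_center, fun z _ => S.mul_self z, fun _ h₁ _ h₂ => S.mul_mem_center h₁ h₂,
    fun _ _ _ h₂ _ _ => S.mul_assoc_of_mem_center h₂, ?_⟩
  obtain ⟨t, hcard⟩ := IsPGroup.iff_card.mp S.isPGroup_two_center
  refine ⟨t, ?_, ?_⟩
  · rw [Set.ncard_sdiff_singleton_of_mem S.one_mem_center, ← Nat.card_coe_set_eq, hcard]
  · rw [← hcard, ← Nat.card_eq_fintype_card]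
    exact S.card_center_dvd_card
end

section
/- Let L_N be an abelian group of exponent 2 (written additively, identity 0), L_Q a Steiner loop, and f : L_Q × L_Q → L_N a symmetric function with f(P, Ω̄) = f(Ω̄, P) = 0. Then the operation (P,x) ∘ (Q,y) = (PQ, x + y + f(P,Q)) on L_Q × L_N defines a Steiner loop (i.e., a totally symmetric loop) if and only if f(P,Q) = f(P, PQ) for all P, Q ∈ L_Q. -/
/-- The Schreier extension operation on `Q × N`. -/
def schreierOp {Q N : Type} [AddCommGroup N] (S : SteinerLoopStr Q)
    (f : Q → Q → N) (a b : Q × N) : Q × N :=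
  (S.mul a.1 b.1, a.2 + b.2 + f a.1 b.1)

theorem schreier_extension_steiner_iff {Q N : Type} [Fintype Q] [Fintype N]
    [AddCommGroup N] (hN2 : ∀ x : N, x + x = 0)
    (S : SteinerLoopStr Q) (f : Q → Q → N)
    (hsym : ∀ P R : Q, f P R = f R P)
    (hf1 : ∀ P : Q, f P S.one = 0)
    (hf2 : ∀ P : Q, f S.one P = 0) :
    ((∀ a b : Q × N, schreierOp S f a b = schreierOp S f b a) ∧
      (∀ a : Q × N, schreierOp S f (S.one, 0) a = a) ∧
      (∀ a b : Q × N, schreierOp S f a (schreierOp S f a b) = b)) ↔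
      (∀ P R : Q, f P R = f P (S.mul P R)) := by
  constructor
  · rintro ⟨-, -, hts⟩ P R
    have h := hts (P, (0 : N)) (R, 0)
    simp only [schreierOp, S.ts, Prod.mk.injEq] at h
    have h2 : f P R + f P (S.mul P R) = 0 := by simpa using h.2
    calc f P R = (f P R + f P (S.mul P R)) + f P (S.mul P R) := by
          rw [add_assoc, hN2, add_zero]
      _ = f P (S.mul P R) := by rw [h2, zero_add]
  · intro h
    refine ⟨?_, ?_, ?_⟩
    · intro a b
      simp [schreierOp, S.comm a.1 b.1, hsym a.1 b.1, add_comm a.2 b.2]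
    · intro a
      simp [schreierOp, S.one_mul, hf2]
    · intro a b
      have key : a.2 + (a.2 + b.2 + f a.1 b.1) + f a.1 (S.mul a.1 b.1) = b.2 := by
        rw [← h a.1 b.1]
        have e : a.2 + (a.2 + b.2 + f a.1 b.1) + f a.1 b.1
            = (a.2 + a.2) + (f a.1 b.1 + f a.1 b.1) + b.2 := by abel
        rw [e, hN2, hN2, zero_add, zero_add]
      simp [schreierOp, S.ts, key]
end

section
/- In a Schreier extension Steiner loop L_S = L_Q × L_N with operation (P,x)∘(Q,y) = (PQ, x+y+f(P,Q)), where f is a factor system (symmetric, f(P,Ω̄)=0, f(P,Q)=f(P,PQ)), the subloop {(Ω̄, x) : x ∈ L_N} is contained in the center of L_S. -/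
theorem kernel_in_center_of_schreier_extension {Q N : Type}
    [AddCommGroup N] (hN2 : ∀ x : N, x + x = 0)
    (S : SteinerLoopStr Q) (f : Q → Q → N)
    (hsym : ∀ P R : Q, f P R = f R P)
    (hf1 : ∀ P : Q, f P S.one = 0)
    (hf2 : ∀ P : Q, f S.one P = 0)
    (hfts : ∀ P R : Q, f P R = f P (S.mul P R)) :
    ∀ (x : N) (a b : Q × N),
      schreierOp S f a (schreierOp S f (S.one, x) b) =
          schreierOp S f (schreierOp S f a (S.one, x)) b ∧
      schreierOp S f (schreierOp S f a (S.one, x)) b =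
          schreierOp S f (S.one, x) (schreierOp S f a b) := by
  intro x a b
  have mul_one : ∀ y, S.mul y S.one = y := fun y => (S.comm y S.one).trans (S.one_mul y)
  simp only [schreierOp, S.one_mul, mul_one, hf1, hf2]
  constructor <;> refine Prod.ext rfl ?_ <;> simp <;> abel
end

section
/- Let f be a factor system for a Schreier extension of Steiner loops with quotient L_Q. If L_Q is an elementary abelian 2-group of order at most 4, then the resulting Steiner loop L_S is associative (a group), hence an elementary abelian 2-group; equivalently, f(P,QR) + f(Q,R) = f(PQ,R) + f(P,Q) holds for all P,Q,R ∈ L_Q. -/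
/-- The Schreier extension operation on `Q × N` for an additive quotient. -/
def schreierOpAdd {Q N : Type} [AddCommGroup Q] [AddCommGroup N]
    (f : Q → Q → N) (a b : Q × N) : Q × N :=
  (a.1 + b.1, a.2 + b.2 + f a.1 b.1)

lemma mem_four {Q : Type} [AddCommGroup Q] [Fintype Q]
    (hQ2 : ∀ x : Q, x + x = 0) (hcard : Fintype.card Q ≤ 4)
    (P R W : Q) (hP : P ≠ 0) (hR : R ≠ 0) (hPR : P ≠ R) :
    W = 0 ∨ W = P ∨ W = R ∨ W = P + R := by
  classical
  by_contra h
  push_neg at h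
  obtain ⟨h0, hp, hr, hpr⟩ := h
  have hPR0 : P + R ≠ 0 := by
    intro hh
    exact hPR ((eq_neg_of_add_eq_zero_left hh).trans
      (neg_eq_of_add_eq_zero_left (hQ2 R)))
  have hPRP : P + R ≠ P := fun hh =>
    hR (add_left_cancel (a := P) (by rw [add_zero]; exact hh))
  have hPRR : P + R ≠ R := fun hh =>
    hP (add_right_cancel (b := R) (by rw [zero_add]; exact hh))
  have hsub : ({W, 0, P, R, P + R} : Finset Q).card ≤ Fintype.card Q :=
    Finset.card_le_univ _
  have hc : ({W, 0, P, R, P + R} : Finset Q).card = 5 := by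
    rw [Finset.card_insert_of_notMem (by simp [h0, hp, hr, hpr]),
      Finset.card_insert_of_notMem (by simp [hP.symm, hR.symm, hPR0.symm]),
      Finset.card_insert_of_notMem (by simp [hPR, hPRP.symm]),
      Finset.card_insert_of_notMem (by simp [hPRR.symm]),
      Finset.card_singleton]
  omega

theorem schreier_extension_index_le_four_associative {Q N : Type}
    [AddCommGroup Q] [Fintype Q] [AddCommGroup N]
    (hQ2 : ∀ x : Q, x + x = 0) (hN2 : ∀ x : N, x + x = 0)
    (hcard : Fintype.card Q ≤ 4)
    (f : Q → Q → N)
    (hsym : ∀ P R : Q, f P R = f R P)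
    (hf1 : ∀ P : Q, f P 0 = 0)
    (hf2 : ∀ P : Q, f 0 P = 0)
    (hfts : ∀ P R : Q, f P R = f P (P + R)) :
    (∀ a b c : Q × N,
        schreierOpAdd f (schreierOpAdd f a b) c =
          schreierOpAdd f a (schreierOpAdd f b c)) ∧
      (∀ P R W : Q, f P (R + W) + f R W = f (P + R) W + f P R) := by
  have hdiag : ∀ P : Q, f P P = 0 := by
    intro P; rw [hfts, hQ2, hf1]
  have hswap : ∀ P R : Q, f P (P + R) = f P R := fun P R => (hfts P R).symm
  have hswap' : ∀ P R : Q, f P (R + P) = f P R := by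
    intro P R; rw [add_comm]; exact hswap P R
  have hcoc : ∀ P R W : Q, f P (R + W) + f R W = f (P + R) W + f P R := by
    intro P R W
    by_cases hP : P = 0
    · subst hP; simp [hf2]
    by_cases hR : R = 0
    · subst hR; simp [hf1, hf2]
    by_cases hPR : P = R
    · rw [← hPR, hswap, hN2, hQ2, hf2, hdiag, add_zero]
    rcases mem_four hQ2 hcard P R W hP hR hPR with h | h | h | h
    · rw [h]; simp [hf1]
    · rw [h, hswap', hsym R P, hsym (P + R) P, hswap]
    · rw [h, hQ2 R, hf1, hdiag, hsym (P + R) R, add_comm P R, hswap,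
        hsym R P, zero_add, hN2]
    · rw [h, show R + (P + R) = P from by
        rw [add_comm P R, ← add_assoc, hQ2, zero_add],
        hdiag, hdiag, add_comm P R, hswap, hsym R P]
  refine ⟨?_, hcoc⟩
  intro a b c
  have h : f a.1 (b.1 + c.1) = f (a.1 + b.1) c.1 + f a.1 b.1 - f b.1 c.1 := by
    rw [eq_sub_iff_add_eq]
    exact hcoc a.1 b.1 c.1
  simp only [schreierOpAdd, Prod.mk.injEq]
  exact ⟨by abel, by rw [h]; abel⟩
end

section
/- Two factor systems f₁, f₂ for Schreier extensions of L_N by L_Q are equivalent (there is an isomorphism of the extension loops inducing the identity on both L_N and L_Q) if and only if f₂ − f₁ = δ¹φ for some function φ : L_Q → L_N with φ(Ω̄) = 0, where (δ¹φ)(P,Q) = φ(PQ) + φ(P) + φ(Q); moreover the isomorphism is given by (P,x) ↦ (P, x + φ(P)). -/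
private lemma coboundary_hom {Q N : Type} [AddCommGroup N] (hN2 : ∀ x : N, x + x = 0)
    (S : SteinerLoopStr Q) (f₁ f₂ : Q → Q → N) (φ : Q → N)
    (hφ : ∀ P R : Q, f₂ P R = f₁ P R + (φ (S.mul P R) + φ P + φ R)) :
    ∀ a b : Q × N,
      (fun a : Q × N => (a.1, a.2 + φ a.1)) (schreierOp S f₁ a b) =
        schreierOp S f₂ (a.1, a.2 + φ a.1) (b.1, b.2 + φ b.1) := by
  intro a b
  simp only [schreierOp]
  refine Prod.ext rfl ?_
  simp only
  rw [hφ a.1 b.1]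
  have h2n : ∀ x : N, (2 : ℕ) • x = 0 := fun x => by rw [two_nsmul]; exact hN2 x
  have h2z : ∀ x : N, (2 : ℤ) • x = 0 := fun x => by rw [two_zsmul]; exact hN2 x
  abel_nf
  simp [h2n, h2z]

private lemma coboundary_bij {Q N : Type} [AddCommGroup N] (hN2 : ∀ x : N, x + x = 0)
    (φ : Q → N) : Function.Bijective (fun a : Q × N => (a.1, a.2 + φ a.1)) := by
  have hinv : Function.Involutive (fun a : Q × N => (a.1, a.2 + φ a.1)) := by
    intro a
    simp only
    refine Prod.ext rfl ?_
    simp only [add_assoc, hN2, add_zero]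
  exact hinv.bijective

theorem equivalent_factor_systems_iff_coboundary {Q N : Type}
    [AddCommGroup N] (hN2 : ∀ x : N, x + x = 0)
    (S : SteinerLoopStr Q) (f₁ f₂ : Q → Q → N)
    (hsym₁ : ∀ P R : Q, f₁ P R = f₁ R P) (hsym₂ : ∀ P R : Q, f₂ P R = f₂ R P)
    (hf₁1 : ∀ P : Q, f₁ P S.one = 0) (hf₂1 : ∀ P : Q, f₂ P S.one = 0)
    (hfts₁ : ∀ P R : Q, f₁ P R = f₁ P (S.mul P R))
    (hfts₂ : ∀ P R : Q, f₂ P R = f₂ P (S.mul P R)) :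
    ((∃ Φ : Q × N → Q × N, Function.Bijective Φ ∧
        (∀ a b : Q × N, Φ (schreierOp S f₁ a b) = schreierOp S f₂ (Φ a) (Φ b)) ∧
        (∀ x : N, Φ (S.one, x) = (S.one, x)) ∧
        (∀ (P : Q) (x : N), (Φ (P, x)).1 = P)) ↔
      (∃ φ : Q → N, φ S.one = 0 ∧
        ∀ P R : Q, f₂ P R = f₁ P R + (φ (S.mul P R) + φ P + φ R))) ∧
    (∀ φ : Q → N, φ S.one = 0 →
      (∀ P R : Q, f₂ P R = f₁ P R + (φ (S.mul P R) + φ P + φ R)) →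
      Function.Bijective (fun a : Q × N => (a.1, a.2 + φ a.1)) ∧
        (∀ a b : Q × N,
          (fun a : Q × N => (a.1, a.2 + φ a.1)) (schreierOp S f₁ a b) =
            schreierOp S f₂ (a.1, a.2 + φ a.1) (b.1, b.2 + φ b.1))) := by
  constructor
  · constructor
    · rintro ⟨Φ, hbij, hhom, hone, hfst⟩
      set φ : Q → N := fun P => (Φ (P, 0)).2 with hφdef
      have hΦval : ∀ (P : Q) (x : N), Φ (P, x) = (P, x + φ P) := by
        intro P x
        have h := hhom (S.one, x) (P, 0)
        have harg : schreierOp S f₁ (S.one, x) (P, 0) = (P, x) := by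
          simp [schreierOp, S.one_mul, hsym₁ S.one P, hf₁1]
        rw [harg, hone] at h
        have hΦP : Φ (P, 0) = (P, φ P) := by
          refine Prod.ext ?_ rfl
          exact hfst P 0
        rw [hΦP] at h
        simp [schreierOp, S.one_mul, hsym₂ S.one P, hf₂1] at h
        rw [h]
      refine ⟨φ, ?_, ?_⟩
      · have := hone 0
        rw [hφdef]; simp only; rw [this]
      · intro P R
        have h := hhom (P, 0) (R, 0)
        rw [hΦval, hΦval, hΦval] at h
        simp [schreierOp] at h
        -- h : f₁ P R + φ (S.mul P R) = φ P + (φ R + f₂ P R) (check shape)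
        have h' : f₁ P R + φ (S.mul P R) = φ P + φ R + f₂ P R := by
          rw [h]
        have hneg : ∀ x : N, -x = x := fun x => neg_eq_of_add_eq_zero_left (hN2 x)
        calc f₂ P R
            = (f₁ P R + φ (S.mul P R)) - φ P - φ R := by rw [h']; abel
          _ = f₁ P R + (φ (S.mul P R) + φ P + φ R) := by
              rw [sub_eq_add_neg, sub_eq_add_neg, hneg, hneg]; abel
    · rintro ⟨φ, hφ1, hφ⟩
      exact ⟨fun a => (a.1, a.2 + φ a.1), coboundary_bij hN2 φ,
        coboundary_hom hN2 S f₁ f₂ φ hφ,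
        fun x => by simp [hφ1], fun P x => rfl⟩
  · intro φ hφ1 hφ
    exact ⟨coboundary_bij hN2 φ, coboundary_hom hN2 S f₁ f₂ φ hφ⟩
end
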